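/- Let f = x⁴ + y⁴ + z⁴ + x²y²z² in ℚ[x,y,z]. The derivation θ₅ = ((1/8)x²y²z + (1/4)z³)·∂x + (−(1/8)xy²z² − (1/4)x³)·∂z satisfies θ₅(f) = 0; in particular θ₅ is a logarithmic derivation with respect to the divisor D = (f = 0) that annihilates f. -/
import Mathlib


open MvPolynomial

noncomputable section

/-- The polynomial ring ℚ[x,y,z]. -/
abbrev R3 : Type := MvPolynomial (Fin 3) ℚ

def x : R3 := X 0
def y : R3 := X 1
def z : R3 := X 2

/-- f = x⁴ + y⁴ + z⁴ + x²y²z². -/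
def f : R3 := x ^ 4 + y ^ 4 + z ^ 4 + x ^ 2 * y ^ 2 * z ^ 2

/-- θ₅ = ((1/8)x²y²z + (1/4)z³)·∂x + (−(1/8)xy²z² − (1/4)x³)·∂z. -/
def θ₅ : Derivation ℚ R3 R3 :=
  mkDerivation ℚ
    ![C (1/8 : ℚ) * x ^ 2 * y ^ 2 * z + C (1/4 : ℚ) * z ^ 3,
      0,
      -(C (1/8 : ℚ) * x * y ^ 2 * z ^ 2) - C (1/4 : ℚ) * x ^ 3]

theorem theta5_annihilates :
    θ₅ f = 0 ∧ ∃ a : R3, θ₅ f = a * f := by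
  have h : θ₅ f = 0 := by
    simp only [f, θ₅, map_add, Derivation.leibniz, Derivation.leibniz_pow, mkDerivation_X,
      Matrix.cons_val_zero, Matrix.cons_val_one, Matrix.head_cons, Matrix.cons_val_two,
      Matrix.tail_cons, smul_eq_mul, nsmul_eq_mul]
    push_cast
    ring_nf
    simp [x, y, z]
    ring_nf
    simp only [(map_ofNat (C : ℚ →+* R3) 4).symm, (map_ofNat (C : ℚ →+* R3) 2).symm,
      ← C_mul, ← C_neg, ← C_add, ← C_sub]
    norm_num [mul_assoc, ← C_mul]
  exact ⟨h, 0, by rw [h, zero_mul]⟩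

end
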